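/- Lemma 5.1 (monotonicity of the two-boundary interface energy). For the FA-1f model with two empty boundaries at density ρ∈(0,1) and all integers L,L'≥1: Σ_{L,L'} ≥ 0, Σ_{L+1,L'} ≤ Σ_{L,L'}, and Σ_{L,L'+1} ≤ Σ_{L,L'}. Consequently the iterated limit Σ = lim_{L→∞} lim_{L'→∞} Σ_{L,L'} exists. -/
import Mathlib


open Finset Filter

open scoped Classical

/-- A configuration on the box `{1,…,N}` (0-indexed by `Fin N`). -/
abbrev Config (N : ℕ) := Fin N → Bool

/-- Occupation variable `η_i ∈ {0,1}` as a real number. -/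
noncomputable def occ {N : ℕ} (η : Config N) (i : Fin N) : ℝ := if η i then 1 else 0

/-- Bernoulli(ρ) product weight of a configuration. -/
noncomputable def bern (ρ : ℝ) {N : ℕ} (η : Config N) : ℝ :=
  ∏ i, (if η i then ρ else 1 - ρ)

/-- Expectation under the Bernoulli(ρ) product measure `ν`. -/
noncomputable def expect (ρ : ℝ) {N : ℕ} (f : Config N → ℝ) : ℝ :=
  ∑ η : Config N, bern ρ η * f η

/-- The configuration `η^i`, obtained by flipping `η` at site `i`. -/
def flipAt {N : ℕ} (η : Config N) (i : Fin N) : Config N :=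
  Function.update η i (!η i)

/-- Occupation at the 1-indexed position `k ∈ {0,…,N+1}`, with boundary value
`bl` at `k = 0` and `br` at `k = N+1` (and beyond). -/
noncomputable def occAt {N : ℕ} (η : Config N) (bl br : ℝ) (k : ℕ) : ℝ :=
  if hk : k = 0 then bl
  else if h : k ≤ N then (if η ⟨k - 1, by omega⟩ then 1 else 0) else br

/-- The three kinetically constrained models considered: East (empty right boundary),
FA-1f with two empty boundaries, FA-1f with one empty (right) boundary. -/
inductive KCM | east | fa2 | fa1

/-- The kinetic constraint `r_i(η)` of each model, at the (0-indexed) site `i`. -/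
noncomputable def constr (m : KCM) {N : ℕ} (η : Config N) (i : Fin N) : ℝ :=
  match m with
  | KCM.east => 1 - occAt η 0 0 (i.1 + 2)
  | KCM.fa2  => 1 - occAt η 0 0 i.1 * occAt η 0 0 (i.1 + 2)
  | KCM.fa1  => 1 - occAt η 1 0 i.1 * occAt η 1 0 (i.1 + 2)

/-- The jump rate `c_i(η) = r_i(η)·[η_i(1−ρ)+(1−η_i)ρ]`. -/
noncomputable def crate (m : KCM) (ρ : ℝ) {N : ℕ} (η : Config N) (i : Fin N) : ℝ :=
  constr m η i * (if η i then 1 - ρ else ρ)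

/-- The escape rate `𝓗(η) = Σ_i c_i(η)`. -/
noncomputable def escRate (m : KCM) (ρ : ℝ) {N : ℕ} (η : Config N) : ℝ :=
  ∑ i, crate m ρ η i

/-- The Dirichlet form `𝒟_N(g) = Σ_i ν(c_i(η)(g(η^i)−g(η))²)`. -/
noncomputable def dirichlet (m : KCM) (ρ : ℝ) {N : ℕ} (g : Config N → ℝ) : ℝ :=
  ∑ i, expect ρ (fun η => crate m ρ η i * (g (flipAt η i) - g η) ^ 2)

/-- The rescaled cumulant generating function `φ^{(N)}(λ)`, via the
Donsker–Varadhan variational (principal eigenvalue) formula. -/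
noncomputable def phi (m : KCM) (ρ : ℝ) (N : ℕ) (lam : ℝ) : ℝ :=
  sSup { x | ∃ f : Config N → ℝ, (∀ η, 0 ≤ f η) ∧ expect ρ f = 1 ∧
    x = (Real.exp lam - 1) * expect ρ (fun η => f η * escRate m ρ η)
        - Real.exp lam * dirichlet m ρ (fun η => Real.sqrt (f η)) }

/-- The mean instantaneous activity `𝔸 = ν(c_j)` at an interior site `j`:
`2ρ(1−ρ)²` for East and `2ρ(1−ρ)(1−ρ²)` for FA-1f. -/
noncomputable def meanAct (m : KCM) (ρ : ℝ) : ℝ :=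
  match m with
  | KCM.east => 2 * ρ * (1 - ρ) ^ 2
  | _ => 2 * ρ * (1 - ρ) * (1 - ρ ^ 2)

/-- The two-boundary interface energy `Σ_{L,L'}` for FA-1f with two empty
boundaries: the infimum of `𝒟_{L+L'+2}(√f)` over probability densities `f`
with `ν(f·η_{L+1}η_{L+2}) = 1`. -/
noncomputable def SigmaTwo (ρ : ℝ) (L L' : ℕ) : ℝ :=
  sInf { x | ∃ f : Config (L + L' + 2) → ℝ, (∀ η, 0 ≤ f η) ∧ expect ρ f = 1 ∧
    expect ρ (fun η => f η * occ η ⟨L, by omega⟩ * occ η ⟨L + 1, by omega⟩) = 1 ∧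
    x = dirichlet KCM.fa2 ρ (fun η => Real.sqrt (f η)) }

/-- The one-boundary interface energy `Σ_L`: the infimum of `𝒟_L(√f)`
over probability densities `f` with `ν(f·η_1) = 1`, for the model `m`. -/
noncomputable def SigmaOne (m : KCM) (ρ : ℝ) (L : ℕ) : ℝ :=
  sInf { x | ∃ f : Config L → ℝ, (∀ η, 0 ≤ f η) ∧ expect ρ f = 1 ∧
    expect ρ (fun η => f η * occAt η 0 0 1) = 1 ∧
    x = dirichlet m ρ (fun η => Real.sqrt (f η)) }

section helpers

variable {ρ : ℝ}

lemma bern_nonneg (h0 : 0 ≤ ρ) (h1 : ρ ≤ 1) {N : ℕ} (η : Config N) : 0 ≤ bern ρ η :=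
  Finset.prod_nonneg fun i _ => by by_cases h : η i <;> simp [h] <;> linarith

lemma expect_nonneg (h0 : 0 ≤ ρ) (h1 : ρ ≤ 1) {N : ℕ} {f : Config N → ℝ}
    (hf : ∀ η, 0 ≤ f η) : 0 ≤ expect ρ f :=
  Finset.sum_nonneg fun η _ => mul_nonneg (bern_nonneg h0 h1 η) (hf η)

lemma expect_mono (h0 : 0 ≤ ρ) (h1 : ρ ≤ 1) {N : ℕ} {f g : Config N → ℝ}
    (h : ∀ η, f η ≤ g η) : expect ρ f ≤ expect ρ g :=
  Finset.sum_le_sum fun η _ => mul_le_mul_of_nonneg_left (h η) (bern_nonneg h0 h1 η)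

lemma occAt0_nonneg {N : ℕ} (η : Config N) (k : ℕ) : 0 ≤ occAt η 0 0 k := by
  unfold occAt; split_ifs <;> norm_num

lemma occAt0_le_one {N : ℕ} (η : Config N) (k : ℕ) : occAt η 0 0 k ≤ 1 := by
  unfold occAt; split_ifs <;> norm_num

lemma constr_fa2 {N : ℕ} (η : Config N) (i : Fin N) :
    constr KCM.fa2 η i = 1 - occAt η 0 0 i.1 * occAt η 0 0 (i.1 + 2) := rfl

lemma constr_fa2_nonneg {N : ℕ} (η : Config N) (i : Fin N) : 0 ≤ constr KCM.fa2 η i := by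
  rw [constr_fa2]
  have a1 := occAt0_nonneg η i.1; have a2 := occAt0_le_one η i.1
  have b1 := occAt0_nonneg η (i.1+2); have b2 := occAt0_le_one η (i.1+2)
  nlinarith

lemma crate_fa2_nonneg (h0 : 0 ≤ ρ) (h1 : ρ ≤ 1) {N : ℕ} (η : Config N) (i : Fin N) :
    0 ≤ crate KCM.fa2 ρ η i := by
  unfold crate
  exact mul_nonneg (constr_fa2_nonneg η i) (by split <;> linarith)

lemma dirichlet_fa2_nonneg (h0 : 0 ≤ ρ) (h1 : ρ ≤ 1) {N : ℕ} (g : Config N → ℝ) :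
    0 ≤ dirichlet KCM.fa2 ρ g :=
  Finset.sum_nonneg fun i _ => expect_nonneg h0 h1 fun η =>
    mul_nonneg (crate_fa2_nonneg h0 h1 η i) (sq_nonneg _)

/-! ### Marginalization -/

def snocE (N : ℕ) : (Config N × Bool) ≃ Config (N+1) where
  toFun p := Fin.snoc p.1 p.2
  invFun η := (fun k => η k.castSucc, η (Fin.last N))
  left_inv p := by obtain ⟨f, b⟩ := p; simp
  right_inv η := by
    funext i
    induction i using Fin.lastCases <;> simp

lemma sum_config_snoc {N : ℕ} (F : Config (N+1) → ℝ) :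
    ∑ η : Config (N+1), F η = ∑ ξ : Config N, ∑ b : Bool, F (Fin.snoc ξ b) := by
  rw [← (snocE N).sum_comp F, Fintype.sum_prod_type]; rfl

lemma bern_snoc {N : ℕ} (ξ : Config N) (b : Bool) :
    bern ρ (Fin.snoc ξ b) = bern ρ ξ * (if b then ρ else 1 - ρ) := by
  unfold bern; rw [Fin.prod_univ_castSucc]; simp

lemma expect_comp_castSucc {N : ℕ} (G : Config N → ℝ) :
    expect ρ (fun η : Config (N+1) => G (fun k => η k.castSucc)) = expect ρ G := by
  unfold _root_.expect
  rw [sum_config_snoc]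
  have key : ∀ ξ : Config N,
      (∑ b : Bool, bern ρ (Fin.snoc ξ b) * G (fun k => (Fin.snoc ξ b : Config (N+1)) k.castSucc))
      = bern ρ ξ * G ξ := by
    intro ξ
    have hres : ∀ b : Bool, (fun k : Fin N => (Fin.snoc ξ b : Config (N+1)) k.castSucc) = ξ := by
      intro b; funext k; simp
    simp only [hres, bern_snoc, Fintype.sum_bool]
    norm_num
    ring
  simp only [key]

lemma sum_config_cons {N : ℕ} (F : Config (N+1) → ℝ) :
    ∑ η : Config (N+1), F η = ∑ b : Bool, ∑ ξ : Config N, F (Fin.cons b ξ) := by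
  rw [← (Fin.consEquiv (fun _ : Fin (N+1) => Bool)).sum_comp F, Fintype.sum_prod_type]; rfl

lemma bern_cons {N : ℕ} (b : Bool) (ξ : Config N) :
    bern ρ (Fin.cons b ξ) = (if b then ρ else 1 - ρ) * bern ρ ξ := by
  unfold bern; rw [Fin.prod_univ_succ]; simp

lemma expect_comp_succ {N : ℕ} (G : Config N → ℝ) :
    expect ρ (fun η : Config (N+1) => G (fun k => η k.succ)) = expect ρ G := by
  unfold _root_.expect
  rw [sum_config_cons]
  have key : ∀ b : Bool,
      (∑ ξ : Config N, bern ρ (Fin.cons b ξ) * G (fun k => (Fin.cons b ξ : Config (N+1)) k.succ))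
      = (if b then ρ else 1 - ρ) * ∑ ξ : Config N, bern ρ ξ * G ξ := by
    intro b
    have hres : ∀ ξ : Config N, (fun k : Fin N => (Fin.cons b ξ : Config (N+1)) k.succ) = ξ := by
      intro ξ; funext k; simp
    rw [Finset.mul_sum]
    refine Finset.sum_congr rfl fun ξ _ => ?_
    rw [hres, bern_cons]; ring
  simp only [key, Fintype.sum_bool]
  norm_num
  ring

/-! ### Flip restriction -/

lemma restrict_flip_castSucc {N : ℕ} (η : Config (N+1)) (i : Fin N) :
    (fun k : Fin N => flipAt η i.castSucc k.castSucc) = flipAt (fun k => η k.castSucc) i := by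
  funext k
  by_cases h : k = i
  · subst h; simp [flipAt]
  · simp [flipAt, Function.update_of_ne ((Fin.castSucc_injective N).ne h),
      Function.update_of_ne h]

lemma restrict_flip_succ {N : ℕ} (η : Config (N+1)) (i : Fin N) :
    (fun k : Fin N => flipAt η i.succ k.succ) = flipAt (fun k => η k.succ) i := by
  funext k
  by_cases h : k = i
  · subst h; simp [flipAt]
  · simp [flipAt, Function.update_of_ne ((Fin.succ_injective N).ne h),
      Function.update_of_ne h]

/-! ### occAt comparison -/

lemma occAt_restrict_eq {N : ℕ} (η : Config (N+1)) {k : ℕ} (hk : k ≤ N) :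
    occAt (fun j : Fin N => η j.castSucc) 0 0 k = occAt η 0 0 k := by
  unfold occAt
  rcases Nat.eq_zero_or_pos k with h | h
  · simp [h]
  · rw [dif_neg (show ¬ k = 0 by omega), dif_neg (show ¬ k = 0 by omega),
      dif_pos hk, dif_pos (show k ≤ N + 1 by omega)]
    rfl

lemma occAt_restrict_le {N : ℕ} (η : Config (N+1)) (k : ℕ) :
    occAt (fun j : Fin N => η j.castSucc) 0 0 k ≤ occAt η 0 0 k := by
  rcases le_or_gt k N with hk | hk
  · exact (occAt_restrict_eq η hk).le
  · have hL : occAt (fun j : Fin N => η j.castSucc) 0 0 k = 0 := by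
      unfold occAt
      rw [dif_neg (show ¬ k = 0 by omega), dif_neg (show ¬ k ≤ N by omega)]
    rw [hL]; exact occAt0_nonneg η k

lemma occAt_tail_eq {N : ℕ} (η : Config (N+1)) {k : ℕ} (hk : 1 ≤ k) :
    occAt (fun j : Fin N => η j.succ) 0 0 k = occAt η 0 0 (k+1) := by
  unfold occAt
  rw [dif_neg (show ¬ k = 0 by omega), dif_neg (show ¬ k + 1 = 0 by omega)]
  by_cases h : k ≤ N
  · rw [dif_pos h, dif_pos (show k + 1 ≤ N + 1 by omega)]
    have e : (⟨k-1, by omega⟩ : Fin N).succ = (⟨k+1-1, by omega⟩ : Fin (N+1)) := by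
      apply Fin.ext; simp [Fin.val_succ]; omega
    show (if η ((⟨k-1, by omega⟩ : Fin N).succ) then (1:ℝ) else 0) = _
    rw [e]
  · rw [dif_neg h, dif_neg (show ¬ k + 1 ≤ N + 1 by omega)]

lemma occAt_tail_le {N : ℕ} (η : Config (N+1)) (k : ℕ) :
    occAt (fun j : Fin N => η j.succ) 0 0 k ≤ occAt η 0 0 (k+1) := by
  rcases Nat.eq_zero_or_pos k with h | h
  · subst h
    have hL : occAt (fun j : Fin N => η j.succ) 0 0 0 = 0 := by unfold occAt; simp
    rw [hL]; exact occAt0_nonneg η 1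
  · exact (occAt_tail_eq η h).le

/-! ### crate comparison -/

lemma crate_castSucc_le (h0 : 0 ≤ ρ) (h1 : ρ ≤ 1) {N : ℕ} (η : Config (N+1)) (i : Fin N) :
    crate KCM.fa2 ρ η i.castSucc ≤ crate KCM.fa2 ρ (fun k => η k.castSucc) i := by
  have hc : constr KCM.fa2 η i.castSucc ≤ constr KCM.fa2 (fun k => η k.castSucc) i := by
    rw [constr_fa2, constr_fa2]
    simp only [Fin.coe_castSucc]
    rw [occAt_restrict_eq η (by omega : i.1 ≤ N)]
    have hB := occAt_restrict_le η (i.1+2)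
    have hA := occAt0_nonneg η i.1
    nlinarith
  unfold crate
  exact mul_le_mul_of_nonneg_right hc (by split <;> linarith)

lemma crate_succ_le (h0 : 0 ≤ ρ) (h1 : ρ ≤ 1) {N : ℕ} (η : Config (N+1)) (i : Fin N) :
    crate KCM.fa2 ρ η i.succ ≤ crate KCM.fa2 ρ (fun k => η k.succ) i := by
  have hc : constr KCM.fa2 η i.succ ≤ constr KCM.fa2 (fun k => η k.succ) i := by
    rw [constr_fa2, constr_fa2]
    simp only [Fin.val_succ]
    have hA := occAt_tail_le η i.1
    have hB := occAt_tail_le η (i.1+2)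
    have e : i.1 + 1 + 2 = i.1 + 2 + 1 := by omega
    rw [e]
    have := mul_le_mul hA hB (occAt0_nonneg _ _) (occAt0_nonneg _ _)
    linarith
  unfold crate
  exact mul_le_mul_of_nonneg_right hc (by split <;> linarith)

/-! ### Dirichlet comparison -/

lemma dirichlet_castSucc_le (h0 : 0 ≤ ρ) (h1 : ρ ≤ 1) {N : ℕ} (g : Config N → ℝ) :
    dirichlet KCM.fa2 ρ (fun η : Config (N+1) => g (fun k => η k.castSucc))
      ≤ dirichlet KCM.fa2 ρ g := by
  unfold dirichlet
  rw [Fin.sum_univ_castSucc]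
  have hlast : expect ρ (fun η : Config (N+1) =>
      crate KCM.fa2 ρ η (Fin.last N) *
        ((fun η : Config (N+1) => g (fun k => η k.castSucc)) (flipAt η (Fin.last N)) -
          (fun η : Config (N+1) => g (fun k => η k.castSucc)) η) ^ 2) = 0 := by
    have e : ∀ η : Config (N+1),
        (fun k : Fin N => flipAt η (Fin.last N) k.castSucc) = fun k => η k.castSucc := by
      intro η; funext k
      exact Function.update_of_ne (Fin.castSucc_lt_last k).ne _ _
    unfold _root_.expect
    refine Finset.sum_eq_zero fun η _ => ?_
    simp [e η]
  rw [hlast, add_zero]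
  refine Finset.sum_le_sum fun i _ => ?_
  calc expect ρ (fun η : Config (N+1) =>
        crate KCM.fa2 ρ η i.castSucc *
          ((fun η : Config (N+1) => g (fun k => η k.castSucc)) (flipAt η i.castSucc) -
            (fun η : Config (N+1) => g (fun k => η k.castSucc)) η) ^ 2)
      ≤ expect ρ (fun η : Config (N+1) =>
          (fun ξ : Config N => crate KCM.fa2 ρ ξ i * (g (flipAt ξ i) - g ξ) ^ 2)
            (fun k => η k.castSucc)) := by
        refine expect_mono h0 h1 fun η => ?_
        show crate KCM.fa2 ρ η i.castSucc *
            (g (fun k => flipAt η i.castSucc k.castSucc) - g (fun k => η k.castSucc)) ^ 2 ≤ _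
        rw [restrict_flip_castSucc η i]
        exact mul_le_mul_of_nonneg_right (crate_castSucc_le h0 h1 η i) (sq_nonneg _)
    _ = expect ρ (fun ξ : Config N => crate KCM.fa2 ρ ξ i * (g (flipAt ξ i) - g ξ) ^ 2) :=
        expect_comp_castSucc (ρ := ρ) (fun ξ : Config N => crate KCM.fa2 ρ ξ i * (g (flipAt ξ i) - g ξ) ^ 2)

lemma dirichlet_succ_le (h0 : 0 ≤ ρ) (h1 : ρ ≤ 1) {N : ℕ} (g : Config N → ℝ) :
    dirichlet KCM.fa2 ρ (fun η : Config (N+1) => g (fun k => η k.succ))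
      ≤ dirichlet KCM.fa2 ρ g := by
  unfold dirichlet
  rw [Fin.sum_univ_succ]
  have hzero : expect ρ (fun η : Config (N+1) =>
      crate KCM.fa2 ρ η 0 *
        ((fun η : Config (N+1) => g (fun k => η k.succ)) (flipAt η 0) -
          (fun η : Config (N+1) => g (fun k => η k.succ)) η) ^ 2) = 0 := by
    have e : ∀ η : Config (N+1),
        (fun k : Fin N => flipAt η 0 k.succ) = fun k => η k.succ := by
      intro η; funext k
      exact Function.update_of_ne (Fin.succ_ne_zero k) _ _
    unfold _root_.expect
    refine Finset.sum_eq_zero fun η _ => ?_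
    simp [e η]
  rw [hzero, zero_add]
  refine Finset.sum_le_sum fun i _ => ?_
  calc expect ρ (fun η : Config (N+1) =>
        crate KCM.fa2 ρ η i.succ *
          ((fun η : Config (N+1) => g (fun k => η k.succ)) (flipAt η i.succ) -
            (fun η : Config (N+1) => g (fun k => η k.succ)) η) ^ 2)
      ≤ expect ρ (fun η : Config (N+1) =>
          (fun ξ : Config N => crate KCM.fa2 ρ ξ i * (g (flipAt ξ i) - g ξ) ^ 2)
            (fun k => η k.succ)) := by
        refine expect_mono h0 h1 fun η => ?_
        show crate KCM.fa2 ρ η i.succ *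
            (g (fun k => flipAt η i.succ k.succ) - g (fun k => η k.succ)) ^ 2 ≤ _
        rw [restrict_flip_succ η i]
        exact mul_le_mul_of_nonneg_right (crate_succ_le h0 h1 η i) (sq_nonneg _)
    _ = expect ρ (fun ξ : Config N => crate KCM.fa2 ρ ξ i * (g (flipAt ξ i) - g ξ) ^ 2) :=
        expect_comp_succ (ρ := ρ) (fun ξ : Config N => crate KCM.fa2 ρ ξ i * (g (flipAt ξ i) - g ξ) ^ 2)

/-! ### Witness -/

lemma sum_config_prod {N : ℕ} (G : Fin N → Bool → ℝ) :
    ∑ η : Config N, ∏ k, G k (η k) = ∏ k, (G k true + G k false) := by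
  classical
  symm
  calc ∏ k, (G k true + G k false) = ∏ k, ∑ b : Bool, G k b := by
        refine Finset.prod_congr rfl fun k _ => ?_
        rw [Fintype.sum_bool]
    _ = ∑ x ∈ Fintype.piFinset (fun _ : Fin N => (Finset.univ : Finset Bool)),
          ∏ k, G k (x k) := Finset.prod_univ_sum _ _
    _ = ∑ η : Config N, ∏ k, G k (η k) := by rw [Fintype.piFinset_univ]

lemma expect_occ_pair (h0 : 0 < ρ) {N : ℕ} (i j : Fin N) (hij : i ≠ j) :
    expect ρ (fun η => occ η i * occ η j) = ρ ^ 2 := by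
  unfold _root_.expect occ bern
  have key : ∀ η : Config N,
      (∏ k, (if η k then ρ else 1-ρ)) * ((if η i then (1:ℝ) else 0) * (if η j then (1:ℝ) else 0))
      = ∏ k, ((if η k then ρ else 1-ρ) * (if k = i then (if η k then (1:ℝ) else 0) else 1)
          * (if k = j then (if η k then (1:ℝ) else 0) else 1)) := by
    intro η
    rw [Finset.prod_mul_distrib, Finset.prod_mul_distrib, Finset.prod_ite_eq',
      Finset.prod_ite_eq']
    simp [mul_assoc]
  simp only [key]
  rw [sum_config_prod (fun k b =>
    ((if b then ρ else 1-ρ) * (if k = i then (if b then (1:ℝ) else 0) else 1)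
      * (if k = j then (if b then (1:ℝ) else 0) else 1)))]
  have step : ∀ k : Fin N,
      ((if (true:Bool) then ρ else 1-ρ) * (if k = i then (if (true:Bool) then (1:ℝ) else 0) else 1)
          * (if k = j then (if (true:Bool) then (1:ℝ) else 0) else 1))
      + ((if (false:Bool) then ρ else 1-ρ) * (if k = i then (if (false:Bool) then (1:ℝ) else 0) else 1)
          * (if k = j then (if (false:Bool) then (1:ℝ) else 0) else 1))
      = (if k = i then ρ else 1) * (if k = j then ρ else 1) := by
    intro k
    by_cases hki : k = i <;> by_cases hkj : k = j
    · exact absurd (hki.symm.trans hkj) hij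
    all_goals simp [hki, hkj, hij, Ne.symm hij]
    all_goals try ring
  rw [Finset.prod_congr rfl (fun k _ => step k), Finset.prod_mul_distrib,
    Finset.prod_ite_eq', Finset.prod_ite_eq']
  simp [sq]

lemma occ_nonneg {N : ℕ} (η : Config N) (i : Fin N) : 0 ≤ occ η i := by
  unfold occ; split <;> norm_num

/-! ### The auxiliary Sigma -/

def SAset (ρ : ℝ) (N a : ℕ) (h : a + 1 < N) : Set ℝ :=
  { x | ∃ f : Config N → ℝ, (∀ η, 0 ≤ f η) ∧ expect ρ f = 1 ∧
    expect ρ (fun η => f η * occ η ⟨a, by omega⟩ * occ η ⟨a+1, h⟩) = 1 ∧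
    x = dirichlet KCM.fa2 ρ (fun η => Real.sqrt (f η)) }

noncomputable def SA (ρ : ℝ) (N a : ℕ) (h : a + 1 < N) : ℝ := sInf (SAset ρ N a h)

lemma SAset_nonneg (h0 : 0 ≤ ρ) (h1 : ρ ≤ 1) {N a : ℕ} {h : a + 1 < N} :
    ∀ x ∈ SAset ρ N a h, 0 ≤ x := by
  rintro x ⟨f, -, -, -, rfl⟩
  exact dirichlet_fa2_nonneg h0 h1 _

lemma SAset_nonempty (h0 : 0 < ρ) (h1 : ρ < 1) {N a : ℕ} (h : a + 1 < N) :
    (SAset ρ N a h).Nonempty := by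
  classical
  set ia : Fin N := ⟨a, by omega⟩
  set ja : Fin N := ⟨a+1, h⟩
  have hij : ia ≠ ja := by
    intro he
    have : a = a + 1 := congrArg Fin.val he
    omega
  have hρ2 : (ρ:ℝ)^2 ≠ 0 := pow_ne_zero 2 h0.ne'
  refine ⟨_, (fun η => occ η ia * occ η ja / ρ^2), fun η =>
    div_nonneg (mul_nonneg (occ_nonneg η ia) (occ_nonneg η ja)) (sq_nonneg ρ), ?_, ?_, rfl⟩
  · have : expect ρ (fun η => occ η ia * occ η ja / ρ^2)
        = expect ρ (fun η => occ η ia * occ η ja) / ρ^2 := by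
      unfold _root_.expect
      have e : ∀ η : Config N, bern ρ η * (occ η ia * occ η ja / ρ^2)
          = bern ρ η * (occ η ia * occ η ja) / ρ^2 := fun η => by ring
      simp only [e]
      rw [← Finset.sum_div]
    rw [this, expect_occ_pair h0 ia ja hij, div_self hρ2]
  · have hpt : ∀ η : Config N,
        occ η ia * occ η ja / ρ^2 * occ η ia * occ η ja = occ η ia * occ η ja / ρ^2 := by
      intro η
      unfold occ
      split_ifs <;> ring
    have : (fun η : Config N => occ η ia * occ η ja / ρ^2 * occ η ia * occ η ja)
        = fun η => occ η ia * occ η ja / ρ^2 := funext hpt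
    rw [this]
    have : expect ρ (fun η => occ η ia * occ η ja / ρ^2)
        = expect ρ (fun η => occ η ia * occ η ja) / ρ^2 := by
      unfold _root_.expect
      have e : ∀ η : Config N, bern ρ η * (occ η ia * occ η ja / ρ^2)
          = bern ρ η * (occ η ia * occ η ja) / ρ^2 := fun η => by ring
      simp only [e]
      rw [← Finset.sum_div]
    rw [this, expect_occ_pair h0 ia ja hij, div_self hρ2]

lemma SA_bddBelow (h0 : 0 ≤ ρ) (h1 : ρ ≤ 1) {N a : ℕ} (h : a + 1 < N) :
    BddBelow (SAset ρ N a h) :=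
  ⟨0, fun y hy => SAset_nonneg h0 h1 y hy⟩

lemma occ_restrict_castSucc {N : ℕ} (η : Config (N+1)) (v : ℕ) (h : v < N) (h' : v < N+1) :
    occ (fun k : Fin N => η k.castSucc) ⟨v, h⟩ = occ η ⟨v, h'⟩ := rfl

lemma occ_restrict_succ {N : ℕ} (η : Config (N+1)) (v : ℕ) (h : v < N) (h' : v + 1 < N+1) :
    occ (fun k : Fin N => η k.succ) ⟨v, h⟩ = occ η ⟨v+1, h'⟩ := rfl

lemma SA_congr {N M a : ℕ} (hNM : N = M) (hN : a + 1 < N) (hM : a + 1 < M) :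
    SA ρ N a hN = SA ρ M a hM := by subst hNM; rfl

lemma SA_step_right (h0 : 0 < ρ) (h1 : ρ < 1) {N a : ℕ} (hN : a + 1 < N) :
    SA ρ (N+1) a (by omega) ≤ SA ρ N a hN := by
  refine le_csInf (SAset_nonempty h0 h1 hN) ?_
  rintro x ⟨f, hf0, hf1, hf2, rfl⟩
  have hmem : dirichlet KCM.fa2 ρ
      (fun η : Config (N+1) => Real.sqrt (f (fun k => η k.castSucc)))
      ∈ SAset ρ (N+1) a (by omega) := by
    refine ⟨fun η => f (fun k => η k.castSucc), fun η => hf0 _, ?_, ?_, rfl⟩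
    · rw [expect_comp_castSucc f]; exact hf1
    · have h := expect_comp_castSucc (ρ := ρ)
        (G := fun ξ : Config N => f ξ * occ ξ ⟨a, by omega⟩ * occ ξ ⟨a+1, hN⟩)
      rw [show (fun η : Config (N+1) => f (fun k => η k.castSucc) *
            occ η ⟨a, by omega⟩ * occ η ⟨a+1, by omega⟩)
          = (fun η : Config (N+1) =>
              f (fun k => η k.castSucc) * occ (fun k => η k.castSucc) ⟨a, by omega⟩ *
                occ (fun k => η k.castSucc) ⟨a+1, hN⟩) from
        funext fun η => by
          rw [occ_restrict_castSucc η a (by omega) (by omega),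
            occ_restrict_castSucc η (a+1) hN (by omega)]]
      exact h.trans hf2
  calc SA ρ (N+1) a (by omega)
      ≤ dirichlet KCM.fa2 ρ (fun η : Config (N+1) => Real.sqrt (f (fun k => η k.castSucc))) :=
        csInf_le (SA_bddBelow h0.le h1.le _) hmem
    _ ≤ dirichlet KCM.fa2 ρ (fun ξ => Real.sqrt (f ξ)) :=
        dirichlet_castSucc_le h0.le h1.le (fun ξ => Real.sqrt (f ξ))

lemma SA_step_left (h0 : 0 < ρ) (h1 : ρ < 1) {N a : ℕ} (hN : a + 1 < N) :
    SA ρ (N+1) (a+1) (by omega) ≤ SA ρ N a hN := by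
  refine le_csInf (SAset_nonempty h0 h1 hN) ?_
  rintro x ⟨f, hf0, hf1, hf2, rfl⟩
  have hmem : dirichlet KCM.fa2 ρ
      (fun η : Config (N+1) => Real.sqrt (f (fun k => η k.succ)))
      ∈ SAset ρ (N+1) (a+1) (by omega) := by
    refine ⟨fun η => f (fun k => η k.succ), fun η => hf0 _, ?_, ?_, rfl⟩
    · rw [expect_comp_succ f]; exact hf1
    · have h := expect_comp_succ (ρ := ρ)
        (G := fun ξ : Config N => f ξ * occ ξ ⟨a, by omega⟩ * occ ξ ⟨a+1, hN⟩)
      rw [show (fun η : Config (N+1) => f (fun k => η k.succ) *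
            occ η ⟨a+1, by omega⟩ * occ η ⟨a+1+1, by omega⟩)
          = (fun η : Config (N+1) =>
              f (fun k => η k.succ) * occ (fun k => η k.succ) ⟨a, by omega⟩ *
                occ (fun k => η k.succ) ⟨a+1, hN⟩) from
        funext fun η => by
          rw [occ_restrict_succ η a (by omega) (by omega),
            occ_restrict_succ η (a+1) hN (by omega)]]
      exact h.trans hf2
  calc SA ρ (N+1) (a+1) (by omega)
      ≤ dirichlet KCM.fa2 ρ (fun η : Config (N+1) => Real.sqrt (f (fun k => η k.succ))) :=
        csInf_le (SA_bddBelow h0.le h1.le _) hmem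
    _ ≤ dirichlet KCM.fa2 ρ (fun ξ => Real.sqrt (f ξ)) :=
        dirichlet_succ_le h0.le h1.le (fun ξ => Real.sqrt (f ξ))

end helpers

/-- **Lemma 5.1** (monotonicity of the two-boundary interface energy). For FA-1f
with two empty boundaries at density `ρ ∈ (0,1)` and all integers `L, L' ≥ 1`:
`Σ_{L,L'} ≥ 0`, `Σ_{L+1,L'} ≤ Σ_{L,L'}` and `Σ_{L,L'+1} ≤ Σ_{L,L'}`.
Consequently the iterated limit `Σ = lim_L lim_{L'} Σ_{L,L'}` exists. -/
theorem sigmaTwo_monotone (ρ : ℝ) (hρ0 : 0 < ρ) (hρ1 : ρ < 1) :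
    (∀ L L' : ℕ, 1 ≤ L → 1 ≤ L' →
      0 ≤ SigmaTwo ρ L L' ∧
      SigmaTwo ρ (L + 1) L' ≤ SigmaTwo ρ L L' ∧
      SigmaTwo ρ L (L' + 1) ≤ SigmaTwo ρ L L') ∧
    ∃ (S : ℕ → ℝ) (Sg : ℝ),
      (∀ L : ℕ, Filter.Tendsto (fun L' : ℕ => SigmaTwo ρ L L') Filter.atTop (nhds (S L))) ∧
      Filter.Tendsto S Filter.atTop (nhds Sg) := by
  have hST : ∀ L L' : ℕ, SigmaTwo ρ L L' = SA ρ (L + L' + 2) L (by omega) := fun L L' => rfl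
  have key1 : ∀ L L' : ℕ, SigmaTwo ρ L (L' + 1) ≤ SigmaTwo ρ L L' := by
    intro L L'
    have h1 : SigmaTwo ρ L (L' + 1) = SA ρ ((L + L' + 2) + 1) L (by omega) := by
      rw [hST L (L'+1)]
      exact SA_congr (by omega) _ _
    rw [h1, hST L L']
    exact SA_step_right hρ0 hρ1 _
  have key2 : ∀ L L' : ℕ, SigmaTwo ρ (L + 1) L' ≤ SigmaTwo ρ L L' := by
    intro L L'
    have h1 : SigmaTwo ρ (L + 1) L' = SA ρ ((L + L' + 2) + 1) (L + 1) (by omega) := by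
      rw [hST (L+1) L']
      exact SA_congr (by omega) _ _
    rw [h1, hST L L']
    exact SA_step_left hρ0 hρ1 _
  have hnonneg : ∀ L L' : ℕ, 0 ≤ SigmaTwo ρ L L' := by
    intro L L'
    rw [hST L L']
    exact Real.sInf_nonneg (SAset_nonneg hρ0.le hρ1.le)
  refine ⟨fun L L' _ _ => ⟨hnonneg L L', key2 L L', key1 L L'⟩, ?_⟩
  have hbdd : ∀ L : ℕ, BddBelow (Set.range fun L' : ℕ => SigmaTwo ρ L L') := by
    intro L
    exact ⟨0, by rintro x ⟨L', rfl⟩; exact hnonneg L L'⟩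
  refine ⟨fun L => ⨅ L' : ℕ, SigmaTwo ρ L L', ⨅ L : ℕ, ⨅ L' : ℕ, SigmaTwo ρ L L', ?_, ?_⟩
  · intro L
    exact tendsto_atTop_ciInf (antitone_nat_of_succ_le (key1 L)) (hbdd L)
  · refine tendsto_atTop_ciInf ?_ ?_
    · refine antitone_nat_of_succ_le fun L => ?_
      exact ciInf_mono (hbdd (L+1)) (fun L' => key2 L L')
    · refine ⟨0, ?_⟩
      rintro x ⟨L, rfl⟩
      exact le_ciInf fun L' => hnonneg L L'
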